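/- Let E be a finite effect algebra with (pairwise distinct) atoms a_1,…,a_m, and suppose s_1,…,s_m are nonnegative real numbers such that Σ_{t=1}^m y_t s_t = 1 for every (y_1,…,y_m) ∈ Seq(E). Then for every x ∈ E written as x = k_1 a_1 ⊕ … ⊕ k_m a_m (with k_t ∈ ℕ, the orthosum defined), one has 0 ≤ Σ_{t=1}^m k_t s_t ≤ 1. -/

import Mathlib

/-- An effect algebra: a set with 0, 1 and a partially defined binary
operation `⊕`, modeled as an `Option`-valued operation. -/
structure EffectAlgebra (E : Type*) where
  oplus : E → E → Option E
  zero : E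
  one : E
  comm : ∀ p q, oplus p q = oplus q p
  assoc : ∀ p q r s qr, oplus q r = some qr → oplus p qr = some s →
    ∃ pq, oplus p q = some pq ∧ oplus pq r = some s
  orthosupp : ∀ p, ∃! q, oplus p q = some one
  zero_unit : ∀ p q, oplus one p = some q → p = zero

namespace EffectAlgebra

variable {E : Type*}

/-- `p ≤ q` iff there is `r` with `p ⊕ r` defined and equal to `q`. -/
def le (W : EffectAlgebra E) (p q : E) : Prop := ∃ r, W.oplus p r = some q

/-- An atom is a minimal element of `E \ {0}`. -/
def IsAtomElem (W : EffectAlgebra E) (x : E) : Prop :=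
  x ≠ W.zero ∧ ∀ y : E, W.le y x → y ≠ W.zero → y = x

/-- Partial orthosum of a list of elements. -/
def listSum (W : EffectAlgebra E) : List E → Option E
  | [] => some W.zero
  | x :: xs => (listSum W xs).bind (fun y => W.oplus x y)

/-- The orthosum `k 0 • a 0 ⊕ ⋯ ⊕ k (m-1) • a (m-1)`, when defined. -/
def mulSum (W : EffectAlgebra E) {m : ℕ} (a : Fin m → E) (k : Fin m → ℕ) : Option E :=
  W.listSum ((List.ofFn (fun t => List.replicate (k t) (a t))).flatten)

/-- `Seq(E)`: tuples `k` with `⨁ k t • a t` defined and equal to `1`. -/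
def SeqSet (W : EffectAlgebra E) {m : ℕ} (a : Fin m → E) : Set (Fin m → ℕ) :=
  {k | W.mulSum a k = some W.one}

/-- `a : Fin m → E` enumerates the atoms of `E` without repetition. -/
def AtomFamily (W : EffectAlgebra E) {m : ℕ} (a : Fin m → E) : Prop :=
  Function.Injective a ∧ (∀ t, W.IsAtomElem (a t)) ∧
    ∀ x : E, W.IsAtomElem x → ∃ t, x = a t

/-- `A ∈ M(E)`: the rows of `A` are pairwise distinct and enumerate `Seq(E)`. -/
def MemM (W : EffectAlgebra E) {m n : ℕ} (a : Fin m → E) (A : Matrix (Fin n) (Fin m) ℕ) : Prop :=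
  (∀ i j : Fin n, i ≠ j → ∃ t, A i t ≠ A j t) ∧
    {k : Fin m → ℕ | ∃ i, A i = k} = W.SeqSet a

/-- A state on an effect algebra. -/
def IsState (W : EffectAlgebra E) (s : E → ℝ) : Prop :=
  (∀ x, 0 ≤ s x ∧ s x ≤ 1) ∧ s W.one = 1 ∧
    ∀ p q r, W.oplus p q = some r → s p + s q ≤ 1 ∧ s r = s p + s q

end EffectAlgebra

/-- `(A|1)`: the matrix `A` augmented by a column of ones. -/
def augmentOnes {n m : ℕ} {R : Type*} [One R] (A : Matrix (Fin n) (Fin m) R) :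
    Matrix (Fin n) (Fin (m + 1)) R :=
  Matrix.of fun i j => if h : (j : ℕ) < m then A i ⟨j, h⟩ else 1

/-! Let `y` be the orthosupplement of `x`. Since `E` is finite, its natural order is well founded,
so every nonzero element lies above an atom; peeling off atoms writes `y = ⨁ k' t • a t`. Then
`k + k' ∈ Seq(E)`, hence `∑ k t * s t + ∑ k' t * s t = 1` with both sums nonnegative. -/

namespace EffectAlgebra

variable {E : Type*} (W : EffectAlgebra E)

lemma assoc' {p q r s pq : E} (h1 : W.oplus p q = some pq) (h2 : W.oplus pq r = some s) :
    ∃ qr, W.oplus q r = some qr ∧ W.oplus p qr = some s := by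
  obtain ⟨rq, hrq, hs⟩ := W.assoc r q p s pq (by rw [W.comm]; exact h1) (by rw [W.comm]; exact h2)
  exact ⟨rq, by rw [W.comm]; exact hrq, by rw [W.comm]; exact hs⟩

lemma one_oplus_zero : W.oplus W.one W.zero = some W.one := by
  obtain ⟨q, hq, -⟩ := W.orthosupp W.one
  rwa [W.zero_unit q W.one hq] at hq

lemma zero_oplus (p : E) : W.oplus W.zero p = some p := by
  obtain ⟨p', hp', -⟩ := W.orthosupp p
  obtain ⟨z, hz, hzp'⟩ := W.assoc W.zero p p' W.one W.one hp'
    (by rw [W.comm]; exact W.one_oplus_zero)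
  obtain ⟨q, -, huniq⟩ := W.orthosupp p'
  have hzq : z = q := huniq z ((W.comm p' z).trans hzp')
  have hpq : p = q := huniq p ((W.comm p' p).trans hp')
  rw [hz, hzq, ← hpq]

lemma oplus_zero (p : E) : W.oplus p W.zero = some p := by
  rw [W.comm]; exact W.zero_oplus p

lemma oplus_left_cancel {p q r v : E} (hq : W.oplus p q = some v) (hr : W.oplus p r = some v) :
    q = r := by
  obtain ⟨v', hv', -⟩ := W.orthosupp v
  obtain ⟨pv, hpv, hq1⟩ := W.assoc' (by rw [W.comm]; exact hq) hv'
  obtain ⟨pv', hpv', hr1⟩ := W.assoc' (by rw [W.comm]; exact hr) hv'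
  obtain rfl : pv = pv' := Option.some.inj (hpv.symm.trans hpv')
  obtain ⟨w, -, huniq⟩ := W.orthosupp pv
  exact (huniq q ((W.comm pv q).trans hq1)).trans (huniq r ((W.comm pv r).trans hr1)).symm

lemma eq_zero_of_oplus_eq_zero {p q : E} (h : W.oplus p q = some W.zero) : p = W.zero := by
  obtain ⟨p1, hp1, -⟩ := W.assoc' (by rw [W.comm]; exact h) (W.zero_oplus W.one)
  exact W.zero_unit p p1 ((W.comm W.one p).trans hp1)

abbrev toPartialOrder : PartialOrder E where
  le := W.le
  le_refl p := ⟨W.zero, W.oplus_zero p⟩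
  le_trans := by
    rintro p q r ⟨u, hu⟩ ⟨v, hv⟩
    obtain ⟨uv, -, huv⟩ := W.assoc' hu hv
    exact ⟨uv, huv⟩
  le_antisymm := by
    rintro p q ⟨u, hu⟩ ⟨v, hv⟩
    obtain ⟨uv, huv, hpuv⟩ := W.assoc' hu hv
    obtain rfl : uv = W.zero := W.oplus_left_cancel hpuv (W.oplus_zero p)
    obtain rfl : u = W.zero := W.eq_zero_of_oplus_eq_zero huv
    exact Option.some.inj ((W.oplus_zero p).symm.trans hu)

lemma wellFounded_lt [Finite E] : WellFounded fun p q => W.le p q ∧ p ≠ q :=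
  letI := W.toPartialOrder
  Subrelation.wf (fun h => lt_iff_le_and_ne.2 h) _root_.wellFounded_lt

lemma exists_atom_le [Finite E] {y : E} (hy : y ≠ W.zero) : ∃ b, W.IsAtomElem b ∧ W.le b y := by
  obtain ⟨b, ⟨hby, hb0⟩, hmin⟩ :=
    W.wellFounded_lt.has_min {z | W.le z y ∧ z ≠ W.zero} ⟨y, W.toPartialOrder.le_refl y, hy⟩
  refine ⟨b, ⟨hb0, fun z hzb hz0 => ?_⟩, hby⟩
  by_contra hzb'
  exact hmin z ⟨W.toPartialOrder.le_trans _ _ _ hzb hby, hz0⟩ ⟨hzb, hzb'⟩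

lemma listSum_perm {l l' : List E} (h : l.Perm l') {w : E} (hw : W.listSum l = some w) :
    W.listSum l' = some w := by
  induction h generalizing w with
  | nil => exact hw
  | cons x _ ih =>
    obtain ⟨v, hv, hxv⟩ := Option.bind_eq_some_iff.mp hw
    exact Option.bind_eq_some_iff.mpr ⟨v, ih hv, hxv⟩
  | swap x y l =>
    obtain ⟨xv, hxv, hyxv⟩ := Option.bind_eq_some_iff.mp hw
    obtain ⟨v, hv, hxv'⟩ := Option.bind_eq_some_iff.mp hxv
    obtain ⟨yx, hyx, hyxv'⟩ := W.assoc y x v w xv hxv' hyxv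
    obtain ⟨yv, hyv, hxyv⟩ := W.assoc' (by rw [W.comm]; exact hyx) hyxv'
    exact Option.bind_eq_some_iff.mpr ⟨yv, Option.bind_eq_some_iff.mpr ⟨v, hv, hyv⟩, hxyv⟩
  | trans _ _ ih₁ ih₂ => exact ih₂ (ih₁ hw)

lemma listSum_append {l₁ l₂ : List E} {u v w : E} (hu : W.listSum l₁ = some u)
    (hv : W.listSum l₂ = some v) (huv : W.oplus u v = some w) : W.listSum (l₁ ++ l₂) = some w := by
  induction l₁ generalizing u w with
  | nil =>
    obtain rfl : u = W.zero := (Option.some.inj hu).symm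
    rwa [List.nil_append, ← Option.some.inj ((W.zero_oplus v).symm.trans huv)]
  | cons x xs ih =>
    obtain ⟨u', hu', hxu'⟩ := Option.bind_eq_some_iff.mp hu
    obtain ⟨u'v, hu'v, hxu'v⟩ := W.assoc' hxu' huv
    exact Option.bind_eq_some_iff.mpr ⟨u'v, ih hu' hu'v, hxu'v⟩

lemma mulSum_add {m : ℕ} {a : Fin m → E} {k k' : Fin m → ℕ} {u v w : E}
    (hu : W.mulSum a k = some u) (hv : W.mulSum a k' = some v) (huv : W.oplus u v = some w) :
    W.mulSum a (k + k') = some w := by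
  refine W.listSum_perm ?_ (W.listSum_append hu hv huv)
  simp only [List.ofFn_eq_map, ← List.flatMap_def, Pi.add_apply, List.replicate_add]
  exact List.flatMap_append_perm _ _ _

lemma mulSum_zero {m : ℕ} (a : Fin m → E) : W.mulSum a 0 = some W.zero := by
  simp [mulSum, listSum]

lemma mulSum_single {m : ℕ} (a : Fin m → E) (t : Fin m) :
    W.mulSum a (Pi.single t 1) = some (a t) := by
  have hlist : (List.ofFn fun u => List.replicate ((Pi.single t 1 : Fin m → ℕ) u) (a u)).flatten
      = [a t] := by
    rw [← List.replicate_one, List.eq_replicate_iff]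
    simp [List.sum_ofFn, Pi.single_apply]
  rw [mulSum, hlist]
  exact W.oplus_zero (a t)

lemma exists_mulSum_eq [Finite E] {m : ℕ} {a : Fin m → E} (ha : W.AtomFamily a) (y : E) :
    ∃ k, W.mulSum a k = some y := by
  induction y using W.wellFounded_lt.induction with
  | _ y ih =>
    by_cases hy : y = W.zero
    · exact ⟨0, hy ▸ W.mulSum_zero a⟩
    obtain ⟨b, hb, r, hbr⟩ := W.exists_atom_le hy
    obtain ⟨t, rfl⟩ := ha.2.2 b hb
    have hry : W.oplus r (a t) = some y := by rw [W.comm]; exact hbr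
    have hrne : r ≠ y := by
      rintro rfl
      exact hb.1 (W.oplus_left_cancel hry (W.oplus_zero r))
    obtain ⟨k, hk⟩ := ih r ⟨⟨a t, hry⟩, hrne⟩
    exact ⟨k + Pi.single t 1, W.mulSum_add hk (W.mulSum_single a t) hry⟩

end EffectAlgebra

/-- If `∑ y t * s t = 1` for all `y ∈ Seq(E)`, then for any
`x = ⨁ k t • a t` one has `0 ≤ ∑ k t * s t ≤ 1`. -/
theorem sum_between_zero_one {E : Type*} [Fintype E] (W : EffectAlgebra E)
    {m : ℕ} (a : Fin m → E) (ha : W.AtomFamily a)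
    (s : Fin m → ℝ) (hs : ∀ t, 0 ≤ s t)
    (hsol : ∀ y ∈ W.SeqSet a, ∑ t : Fin m, (y t : ℝ) * s t = 1)
    (x : E) (k : Fin m → ℕ) (hk : W.mulSum a k = some x) :
    0 ≤ ∑ t : Fin m, (k t : ℝ) * s t ∧ ∑ t : Fin m, (k t : ℝ) * s t ≤ 1 := by
  have hnonneg (j : Fin m → ℕ) : 0 ≤ ∑ t, (j t : ℝ) * s t :=
    Finset.sum_nonneg fun t _ => mul_nonneg (Nat.cast_nonneg _) (hs t)
  obtain ⟨y, hxy, -⟩ := W.orthosupp x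
  obtain ⟨k', hk'⟩ := W.exists_mulSum_eq ha y
  have hseq : k + k' ∈ W.SeqSet a := W.mulSum_add hk hk' hxy
  have hsplit : ∑ t, (k t : ℝ) * s t + ∑ t, (k' t : ℝ) * s t = 1 := by
    rw [← hsol _ hseq, ← Finset.sum_add_distrib]
    simp only [Pi.add_apply, Nat.cast_add, add_mul]
  exact ⟨hnonneg k, by linarith [hnonneg k']⟩
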